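/- Let m ≥ 2, 0 < a ≤ 1/4, and 1/(2m) < α < 1/m, and set r_i = a i^{-α}. For r > 0 let H_{B(0;r)}(t) = ∫_{B(0;r)} ∫_{B(0;r)} (4πt)^{-m/2} e^{-|x−y|²/(4t)} dy dx be the heat content of the ball B(0;r) ⊆ ℝ^m. Then for every t > 0, ∑_{i=1}^∞ H_{B(0; a i^{-α})}(t) ≤ ∫_0^∞ H_{B(0; a s^{-α})}(t) ds = c_{α,m} t^{(mα−1)/(2α)}, where c_{α,m} = 2^{m−1−1/α} π^{-m/2} α^{-1} Γ((2mα−1)/(2α)) a^{1/α} ∫_{B(0;1)} ∫_{B(0;1)} |x−y|^{(1−2mα)/α} dy dx and Γ is the Gamma function. -/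

import Mathlib

open MeasureTheory Metric ENNReal

/-- The heat content of an open set `Ω ⊆ ℝᵐ` at time `t`, computed with the Euclidean
heat kernel `p(x,y;t) = (4πt)^{-m/2} e^{-|x-y|²/(4t)}`. -/
noncomputable def heatContent {m : ℕ} (Ω : Set (EuclideanSpace ℝ (Fin m))) (t : ℝ) :
    ℝ≥0∞ :=
  ∫⁻ x in Ω, ∫⁻ y in Ω,
    ENNReal.ofReal ((4 * Real.pi * t) ^ (-(m : ℝ) / 2) * Real.exp (-dist x y ^ 2 / (4 * t)))

/-!
Since `r ↦ H_{B(0;r)}(t)` is increasing, `s ↦ H_{B(0; a s^{-α})}(t)` is antitone, and the integral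
test bounds the series by the integral. Rescaling `x = r u`, `y = r v` writes `H_{B(0;r)}(t)` as an
integral over `B(0;1)²` of `r^{2m} p(ru, rv; t)`. After Tonelli, for fixed `u ≠ v` the integral in
`s` of this kernel with `r = a s^{-α}` is, after `s ↦ s⁻¹`, the Gamma integral
`∫_0^∞ s^{-2mα} e^{-C s^{-2α}} ds = C^{-γ} Γ(γ) / (2α)` with `C = a²|u-v|²/(4t)`,
`γ = (2mα-1)/(2α)`; it converges because `2mα > 1`. What is left, `|u-v|^{(1-2mα)/α}`, is
integrable on `B(0;1)²` because its exponent exceeds `-m`, i.e. `α < 1/m`.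
-/

open Set Module Function

section AddRightInvariant

variable {G : Type*} [NormedAddCommGroup G] [MeasurableSpace G] [BorelSpace G] (μ : Measure G)
  [μ.IsAddRightInvariant]

theorem setLIntegral_ball_one_norm_sub_rpow_le {x : G} (hx : x ∈ ball (0 : G) 1) (P : ℝ) :
    ∫⁻ y in ball 0 1, ENNReal.ofReal (‖x - y‖ ^ P) ∂μ
      ≤ ∫⁻ w in ball 0 2, ENNReal.ofReal (‖w‖ ^ P) ∂μ := by
  set F : G → ℝ≥0∞ := (ball 0 2).indicator fun w => ENNReal.ofReal (‖w‖ ^ P)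
  calc ∫⁻ y in ball 0 1, ENNReal.ofReal (‖x - y‖ ^ P) ∂μ
      ≤ ∫⁻ y in ball 0 1, F (y - x) ∂μ := by
        refine setLIntegral_mono' measurableSet_ball fun y hy => le_of_eq ?_
        have hyx : y - x ∈ ball (0 : G) 2 := by
          rw [mem_ball_zero_iff] at hx hy ⊢
          linarith [norm_sub_le y x]
        simp only [F, indicator_of_mem hyx, norm_sub_rev]
    _ ≤ ∫⁻ y, F (y - x) ∂μ := setLIntegral_le_lintegral _ _
    _ = ∫⁻ w in ball 0 2, ENNReal.ofReal (‖w‖ ^ P) ∂μ := by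
        rw [lintegral_sub_right_eq_self, lintegral_indicator measurableSet_ball]

end AddRightInvariant

section HaarMeasure

variable {E : Type*} [NormedAddCommGroup E] [NormedSpace ℝ E] [MeasurableSpace E] [BorelSpace E]
  [FiniteDimensional ℝ E] (μ : Measure E) [μ.IsAddHaarMeasure]

theorem setLIntegral_ball_zero_eq_mul_setLIntegral_comp_smul (f : E → ℝ≥0∞) {r : ℝ}
    (hr : 0 < r) :
    ∫⁻ x in ball 0 r, f x ∂μ
      = ENNReal.ofReal (r ^ finrank ℝ E) * ∫⁻ u in ball 0 1, f (r • u) ∂μ := by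
  let e : E ≃ᵐ E := (Homeomorph.smul (Units.mk0 r hr.ne')).toMeasurableEquiv
  have he : e ⁻¹' ball 0 r = ball 0 1 := by
    ext u
    simp [e, norm_smul, abs_of_pos hr, hr]
  have hmap : μ.map e = ENNReal.ofReal (r ^ finrank ℝ E)⁻¹ • μ := by
    have := Measure.map_addHaar_smul μ hr.ne'
    rwa [abs_of_pos (by positivity)] at this
  calc ∫⁻ x in ball 0 r, f x ∂μ
      = ENNReal.ofReal (r ^ finrank ℝ E) * ∫⁻ x in ball 0 r, f x ∂μ.map e := by
        rw [hmap, Measure.restrict_smul, lintegral_smul_measure, smul_eq_mul, ← mul_assoc,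
          ← ENNReal.ofReal_mul (by positivity), mul_inv_cancel₀ (by positivity),
          ENNReal.ofReal_one, one_mul]
    _ = _ := by rw [e.restrict_map, he, lintegral_map_equiv]; rfl

theorem integrableOn_ball_norm_rpow [Nontrivial E] {P : ℝ} (hP : -(finrank ℝ E : ℝ) < P)
    (r : ℝ) : IntegrableOn (fun x : E => ‖x‖ ^ P) (ball 0 r) μ :=
  integrableOn_ball_of_norm_le_rpow finrank_pos (C := 1) (α := -P) (by linarith)
    (ae_of_all _ fun x => by simp [abs_of_nonneg (Real.rpow_nonneg (norm_nonneg x) P)])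
    (Measurable.aestronglyMeasurable (by fun_prop))

theorem integrable_norm_sub_rpow_ball_prod [Nontrivial E] {P : ℝ}
    (hP : -(finrank ℝ E : ℝ) < P) :
    Integrable (fun z : E × E => ‖z.1 - z.2‖ ^ P)
      ((μ.restrict (ball 0 1)).prod (μ.restrict (ball 0 1))) := by
  refine ⟨Measurable.aestronglyMeasurable (by fun_prop), ?_⟩
  rw [hasFiniteIntegral_iff_ofReal (ae_of_all _ fun z => by positivity),
    lintegral_prod _ (by fun_prop)]
  calc ∫⁻ x in ball 0 1, ∫⁻ y in ball 0 1, ENNReal.ofReal (‖x - y‖ ^ P) ∂μ ∂μ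
      ≤ ∫⁻ _ in ball 0 1, ∫⁻ w in ball 0 2, ENNReal.ofReal (‖w‖ ^ P) ∂μ ∂μ :=
        setLIntegral_mono' measurableSet_ball fun x hx =>
          setLIntegral_ball_one_norm_sub_rpow_le μ hx P
    _ < ⊤ := by
        rw [setLIntegral_const]
        exact mul_lt_top (integrableOn_ball_norm_rpow μ hP 2).lintegral_lt_top
          measure_ball_lt_top

theorem lintegral_ball_lintegral_ball_ofReal_norm_sub_rpow [Nontrivial E] {P : ℝ}
    (hP : -(finrank ℝ E : ℝ) < P) :
    ∫⁻ x in ball 0 1, ∫⁻ y in ball 0 1, ENNReal.ofReal (‖x - y‖ ^ P) ∂μ ∂μ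
      = ENNReal.ofReal (∫ x in ball 0 1, ∫ y in ball 0 1, ‖x - y‖ ^ P ∂μ ∂μ) := by
  have hint := integrable_norm_sub_rpow_ball_prod μ hP
  rw [← integral_prod _ hint, ofReal_integral_eq_lintegral_ofReal hint
    (ae_of_all _ fun z => by positivity), lintegral_prod _ (by fun_prop)]

end HaarMeasure

theorem AntitoneOn.tsum_add_one_le_lintegral_Ioi {f : ℝ → ℝ≥0∞} (hf : AntitoneOn f (Ioi 0)) :
    ∑' n : ℕ, f (n + 1) ≤ ∫⁻ x in Ioi 0, f x := by
  have hdisj : Pairwise (Disjoint on fun n : ℕ => Ioc (n : ℝ) (n + 1)) := by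
    intro i j hij
    simpa [onFun] using pairwise_disjoint_Ioc_intCast ℝ (Nat.cast_injective.ne hij : (i : ℤ) ≠ j)
  calc ∑' n : ℕ, f (n + 1)
      = ∑' n : ℕ, ∫⁻ _ in Ioc (n : ℝ) (n + 1), f (n + 1) := by simp
    _ ≤ ∑' n : ℕ, ∫⁻ x in Ioc (n : ℝ) (n + 1), f x := by
        refine ENNReal.tsum_le_tsum fun n => setLIntegral_mono' measurableSet_Ioc fun x hx => ?_
        exact hf (lt_of_le_of_lt n.cast_nonneg hx.1) (by simp; linarith) hx.2
    _ = ∫⁻ x in ⋃ n : ℕ, Ioc (n : ℝ) (n + 1), f x :=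
        (lintegral_iUnion (fun _ => measurableSet_Ioc) hdisj f).symm
    _ ≤ ∫⁻ x in Ioi 0, f x :=
        lintegral_mono_set <| iUnion_subset fun n => Ioc_subset_Ioi_self.trans <|
          Ioi_subset_Ioi n.cast_nonneg

open Real in
theorem lintegral_rpow_neg_mul_exp_neg_mul_rpow_neg {b e C : ℝ} (hb : 0 < b) (he : 1 < e)
    (hC : 0 < C) :
    ∫⁻ x in Ioi 0, ENNReal.ofReal (x ^ (-e) * exp (-C * x ^ (-b)))
      = ENNReal.ofReal (C ^ (-(e - 1) / b) * (1 / b) * Gamma ((e - 1) / b)) := by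
  have hq : -1 < e - 2 := by linarith
  set g : ℝ → ℝ := fun y => y ^ (e - 2) * exp (-C * y ^ b)
  have hsubst : EqOn (fun x => (|(-1 : ℝ)| * x ^ ((-1 : ℝ) - 1)) • g (x ^ (-1 : ℝ)))
      (fun x => x ^ (-e) * exp (-C * x ^ (-b))) (Ioi 0) := by
    intro x (hx : 0 < x)
    simp only [g, smul_eq_mul, abs_neg, abs_one, one_mul, Real.rpow_neg_one, inv_rpow hx.le,
      ← rpow_neg hx.le, ← mul_assoc, ← rpow_add hx]
    ring_nf
  have hint : IntegrableOn (fun x => x ^ (-e) * exp (-C * x ^ (-b))) (Ioi 0) :=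
    ((integrableOn_Ioi_comp_rpow_iff g (by norm_num)).2
      (integrableOn_rpow_mul_exp_neg_mul_rpow hq hb hC)).congr_fun hsubst measurableSet_Ioi
  rw [← ofReal_integral_eq_lintegral_ofReal hint
      ((ae_restrict_iff' measurableSet_Ioi).2 (ae_of_all _ fun x (hx : 0 < x) => by positivity)),
    ← setIntegral_congr_fun measurableSet_Ioi hsubst, integral_comp_rpow_Ioi g (by norm_num),
    integral_rpow_mul_exp_neg_mul_rpow hb hq hC, show e - 2 + 1 = e - 1 by ring]

theorem heatContent_mono {m : ℕ} {Ω Ω' : Set (EuclideanSpace ℝ (Fin m))} (h : Ω ⊆ Ω') (t : ℝ) :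
    heatContent Ω t ≤ heatContent Ω' t :=
  lintegral_mono' (Measure.restrict_mono h le_rfl) fun _ =>
    lintegral_mono' (Measure.restrict_mono h le_rfl) fun _ => le_rfl

/-- `rescaledHeatKernel m t r |u - v| = r^{2m} p(ru, rv; t)`, the kernel of the heat content of
`B(0; r)` transported to the unit ball. -/
noncomputable def rescaledHeatKernel (m : ℕ) (t r d : ℝ) : ℝ :=
  r ^ (2 * m) * ((4 * Real.pi * t) ^ (-(m : ℝ) / 2) * Real.exp (-(r * d) ^ 2 / (4 * t)))

theorem heatContent_ball_eq_lintegral_rescaledHeatKernel {m : ℕ} {r : ℝ} (hr : 0 < r) (t : ℝ) :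
    heatContent (ball (0 : EuclideanSpace ℝ (Fin m)) r) t
      = ∫⁻ u in ball (0 : EuclideanSpace ℝ (Fin m)) 1, ∫⁻ v in ball 0 1,
          ENNReal.ofReal (rescaledHeatKernel m t r (dist u v)) := by
  simp_rw [heatContent, setLIntegral_ball_zero_eq_mul_setLIntegral_comp_smul volume _ hr,
    finrank_euclideanSpace_fin, dist_smul₀, Real.norm_eq_abs, abs_of_pos hr]
  rw [← lintegral_const_mul' _ _ ofReal_ne_top]
  refine lintegral_congr fun u => ?_
  rw [← lintegral_const_mul' _ _ ofReal_ne_top, ← lintegral_const_mul' _ _ ofReal_ne_top]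
  refine lintegral_congr fun v => ?_
  rw [← ofReal_mul (by positivity), ← ofReal_mul (by positivity), rescaledHeatKernel, pow_mul']
  ring_nf

/-- `c_{α,m} t^{(mα-1)/(2α)}` divided by `∫_{B(0;1)} ∫_{B(0;1)} |x-y|^{(1-2mα)/α} dy dx`. -/
noncomputable def heatContentConst (m : ℕ) (a α t : ℝ) : ℝ :=
  2 ^ ((m : ℝ) - 1 - 1 / α) * Real.pi ^ (-(m : ℝ) / 2) * α⁻¹
    * Real.Gamma ((2 * m * α - 1) / (2 * α)) * a ^ (1 / α) * t ^ (((m : ℝ) * α - 1) / (2 * α))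

theorem heatContentConst_pos {m : ℕ} {a α t : ℝ} (ha : 0 < a) (hmα : 1 < 2 * m * α)
    (ht : 0 < t) : 0 < heatContentConst m a α t := by
  have hα : 0 < α := pos_of_mul_pos_right (one_pos.trans hmα) (by positivity)
  have := Real.pi_pos
  have := Real.Gamma_pos_of_pos (div_pos (sub_pos.2 hmα) (by positivity : 0 < 2 * α))
  unfold heatContentConst
  positivity

open Real in
theorem lintegral_Ioi_rescaledHeatKernel {m : ℕ} {a α t d : ℝ} (ha : 0 < a)
    (hmα : 1 < 2 * m * α) (ht : 0 < t) (hd : 0 < d) :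
    ∫⁻ s in Ioi 0, ENNReal.ofReal (rescaledHeatKernel m t (a * s ^ (-α)) d)
      = ENNReal.ofReal (heatContentConst m a α t * d ^ ((1 - 2 * (m : ℝ) * α) / α)) := by
  have hα : 0 < α := pos_of_mul_pos_right (one_pos.trans hmα) (by positivity)
  set K := (4 * π * t) ^ (-(m : ℝ) / 2) * a ^ (2 * m)
  set C := a ^ 2 * d ^ 2 / (4 * t)
  have hintegrand : EqOn (fun s => ENNReal.ofReal (rescaledHeatKernel m t (a * s ^ (-α)) d))
      (fun s => ENNReal.ofReal K * ENNReal.ofReal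
        (s ^ (-(2 * m * α)) * exp (-C * s ^ (-(2 * α))))) (Ioi 0) := by
    intro s (hs : 0 < s)
    have hpow : ∀ n : ℕ, (s ^ (-α)) ^ n = s ^ (-(n * α)) := fun n => by
      rw [← Real.rpow_natCast, ← rpow_mul hs.le]; ring_nf
    simp only [K, C]
    rw [← ofReal_mul (by positivity), rescaledHeatKernel, mul_pow, mul_pow, mul_pow, hpow, hpow]
    push_cast
    ring_nf
  have hconst : K * (C ^ (-(2 * m * α - 1) / (2 * α)) * (1 / (2 * α)))
      = 2 ^ ((m : ℝ) - 1 - 1 / α) * π ^ (-(m : ℝ) / 2) * α⁻¹ * a ^ (1 / α)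
          * t ^ (((m : ℝ) * α - 1) / (2 * α)) * d ^ ((1 - 2 * (m : ℝ) * α) / α) := by
    refine log_injOn_pos (mem_Ioi.2 (by positivity)) (mem_Ioi.2 (by positivity)) ?_
    simp (disch := positivity) only [K, C, Real.log_mul, Real.log_div, Real.log_rpow,
      Real.log_pow, Real.log_inv, one_div]
    rw [show (4 : ℝ) = 2 ^ 2 by norm_num, Real.log_pow]
    push_cast
    field_simp
    ring
  rw [setLIntegral_congr_fun measurableSet_Ioi hintegrand, lintegral_const_mul' _ _ ofReal_ne_top,
    lintegral_rpow_neg_mul_exp_neg_mul_rpow_neg (by positivity) hmα (by positivity),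
    ← ofReal_mul (by positivity), ← mul_assoc, hconst, heatContentConst]
  ring_nf

theorem measurable_rescaledHeatKernel (m : ℕ) (t : ℝ) :
    Measurable (uncurry (rescaledHeatKernel m t)) := by
  unfold rescaledHeatKernel
  fun_prop

theorem lintegral_Ioi_heatContent_ball_rpow {m : ℕ} {a α t : ℝ} (ha : 0 < a)
    (hmα : 1 < 2 * m * α) (ht : 0 < t) :
    ∫⁻ s in Ioi 0, heatContent (ball (0 : EuclideanSpace ℝ (Fin m)) (a * s ^ (-α))) t
      = ENNReal.ofReal (heatContentConst m a α t)
          * ∫⁻ u in ball (0 : EuclideanSpace ℝ (Fin m)) 1, ∫⁻ v in ball 0 1,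
            ENNReal.ofReal (‖u - v‖ ^ ((1 - 2 * (m : ℝ) * α) / α)) := by
  have : Nonempty (Fin m) := ⟨⟨0, Nat.pos_of_ne_zero (by rintro rfl; norm_num at hmα)⟩⟩
  set F : ℝ × EuclideanSpace ℝ (Fin m) × EuclideanSpace ℝ (Fin m) → ℝ≥0∞ :=
    fun p => ENNReal.ofReal (rescaledHeatKernel m t (a * p.1 ^ (-α)) (dist p.2.1 p.2.2))
  have hF : Measurable F := ((measurable_rescaledHeatKernel m t).comp
    ((measurable_const.mul (measurable_fst.pow_const _)).prodMk
      (measurable_snd.fst.dist measurable_snd.snd))).ennreal_ofReal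
  calc ∫⁻ s in Ioi 0, heatContent (ball (0 : EuclideanSpace ℝ (Fin m)) (a * s ^ (-α))) t
      = ∫⁻ s in Ioi 0, ∫⁻ u in ball (0 : EuclideanSpace ℝ (Fin m)) 1, ∫⁻ v in ball 0 1,
          F (s, u, v) :=
        setLIntegral_congr_fun measurableSet_Ioi fun s (hs : 0 < s) =>
          heatContent_ball_eq_lintegral_rescaledHeatKernel (by positivity) t
    _ = ∫⁻ u in ball (0 : EuclideanSpace ℝ (Fin m)) 1, ∫⁻ v in ball 0 1, ∫⁻ s in Ioi 0,
          F (s, u, v) := by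
        rw [lintegral_lintegral_swap (by fun_prop)]
        exact lintegral_congr fun u => lintegral_lintegral_swap (by fun_prop)
    _ = ∫⁻ u in ball (0 : EuclideanSpace ℝ (Fin m)) 1, ∫⁻ v in ball 0 1,
          ENNReal.ofReal (heatContentConst m a α t * ‖u - v‖ ^ ((1 - 2 * (m : ℝ) * α) / α)) := by
        refine lintegral_congr fun u => lintegral_congr_ae ?_
        filter_upwards [ae_restrict_of_ae (compl_mem_ae_iff.2 (measure_singleton u))]
          with v (hv : v ≠ u)
        rw [lintegral_Ioi_rescaledHeatKernel ha hmα ht (dist_pos.2 hv.symm), dist_eq_norm]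
    _ = _ := by
        simp_rw [ofReal_mul (heatContentConst_pos ha hmα ht).le,
          lintegral_const_mul' _ _ ofReal_ne_top]

theorem sum_heat_content_balls_le_integral_general
    (m : ℕ) (a α : ℝ) (ha : 0 < a)
    (hα₁ : 1 / (2 * m) < α) (hα₂ : α < 1 / m)
    (c : ℝ)
    (hc : c = 2 ^ ((m : ℝ) - 1 - 1 / α) * Real.pi ^ (-(m : ℝ) / 2) * α⁻¹ *
      Real.Gamma ((2 * (m : ℝ) * α - 1) / (2 * α)) * a ^ (1 / α) *
      ∫ x in ball (0 : EuclideanSpace ℝ (Fin m)) 1,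
        ∫ y in ball (0 : EuclideanSpace ℝ (Fin m)) 1,
          ‖x - y‖ ^ ((1 - 2 * (m : ℝ) * α) / α)) :
    ∀ t : ℝ, 0 < t →
      (∑' i : ℕ,
          heatContent (ball (0 : EuclideanSpace ℝ (Fin m)) (a * ((i : ℝ) + 1) ^ (-α))) t)
        ≤ ∫⁻ s in Set.Ioi (0 : ℝ),
            heatContent (ball (0 : EuclideanSpace ℝ (Fin m)) (a * s ^ (-α))) t ∧
      (∫⁻ s in Set.Ioi (0 : ℝ),
          heatContent (ball (0 : EuclideanSpace ℝ (Fin m)) (a * s ^ (-α))) t)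
        = ENNReal.ofReal (c * t ^ (((m : ℝ) * α - 1) / (2 * α))) := by
  intro t ht
  have hm : 0 < m := Nat.pos_of_ne_zero fun h => by simp [h] at hα₁ hα₂; linarith
  have : Nonempty (Fin m) := ⟨⟨0, hm⟩⟩
  have hα : 0 < α := lt_trans (by positivity) hα₁
  have hmα : 1 < 2 * m * α := by rwa [div_lt_iff₀ (by positivity), mul_comm] at hα₁
  have hP : -(finrank ℝ (EuclideanSpace ℝ (Fin m)) : ℝ) < (1 - 2 * m * α) / α := by
    rw [finrank_euclideanSpace_fin, lt_div_iff₀ hα]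
    rw [lt_div_iff₀ (by positivity)] at hα₂
    linarith
  refine ⟨AntitoneOn.tsum_add_one_le_lintegral_Ioi fun s (hs : 0 < s) s' _ hss' =>
    heatContent_mono (ball_subset_ball (mul_le_mul_of_nonneg_left
      (Real.rpow_le_rpow_of_nonpos hs hss' (by linarith)) ha.le)) t, ?_⟩
  rw [lintegral_Ioi_heatContent_ball_rpow ha hmα ht,
    lintegral_ball_lintegral_ball_ofReal_norm_sub_rpow volume hP,
    ← ofReal_mul (heatContentConst_pos ha hmα ht).le, hc, heatContentConst]
  ring_nf

/-- For `1/(2m) < α < 1/m` and `0 < a ≤ 1/4`, the sum of the heat contents of the balls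
`B(0; a i^{-α})`, `i ≥ 1`, is bounded by the integral `∫_0^∞ H_{B(0; a s^{-α})}(t) ds`,
which equals `c_{α,m} t^{(mα-1)/(2α)}` with
`c_{α,m} = 2^{m-1-1/α} π^{-m/2} α⁻¹ Γ((2mα-1)/(2α)) a^{1/α}
  ∫_{B(0;1)} ∫_{B(0;1)} |x-y|^{(1-2mα)/α} dy dx`. -/
theorem sum_heat_content_balls_le_integral
    (m : ℕ) (hm : 2 ≤ m) (a α : ℝ) (ha : 0 < a) (ha' : a ≤ 1 / 4)
    (hα₁ : 1 / (2 * m) < α) (hα₂ : α < 1 / m)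
    (c : ℝ)
    (hc : c = 2 ^ ((m : ℝ) - 1 - 1 / α) * Real.pi ^ (-(m : ℝ) / 2) * α⁻¹ *
      Real.Gamma ((2 * (m : ℝ) * α - 1) / (2 * α)) * a ^ (1 / α) *
      ∫ x in ball (0 : EuclideanSpace ℝ (Fin m)) 1,
        ∫ y in ball (0 : EuclideanSpace ℝ (Fin m)) 1,
          ‖x - y‖ ^ ((1 - 2 * (m : ℝ) * α) / α)) :
    ∀ t : ℝ, 0 < t →
      (∑' i : ℕ,
          heatContent (ball (0 : EuclideanSpace ℝ (Fin m)) (a * ((i : ℝ) + 1) ^ (-α))) t)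
        ≤ ∫⁻ s in Set.Ioi (0 : ℝ),
            heatContent (ball (0 : EuclideanSpace ℝ (Fin m)) (a * s ^ (-α))) t ∧
      (∫⁻ s in Set.Ioi (0 : ℝ),
          heatContent (ball (0 : EuclideanSpace ℝ (Fin m)) (a * s ^ (-α))) t)
        = ENNReal.ofReal (c * t ^ (((m : ℝ) * α - 1) / (2 * α))) :=
  sum_heat_content_balls_le_integral_general m a α ha hα₁ hα₂ c hc
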